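/- arXiv:1811.05864 — 3 statements merged into one kernel-verified Lean document; each statement's English description precedes it below -/
import Mathlib

section
/- The marginal caching value m^c_i(X) = G(X|x^c_i=1) - G(X|x^c_i=0) factors as λ^c_i · w̄^c_i, where λ^c_i = Σ_{(c,p)∈R^c_i} λ_{(c,p)} · Π_{k'=1}^{i'-1}(1 - x^c_{p_{k'}}) is the effective arrival rate of requests for c reaching node i, and w̄^c_i is the corresponding arrival-rate-weighted average of the upstream costs w_{(c,p)} = w_{p_{i'+1}p_{i'}} + Σ_{k=i'+1}^{K-1} w_{p_{k+1}p_k} · Π_{k'=i'+1}^{k}(1-x^c_{p_{k'}}), provided λ^c_i > 0. -/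
open Finset

/-
Only the requests for `c` whose path passes through `i` see the entry `x^c_i`. For such a
request the gain `Σ_k w_k (1 - Π_{k' ≤ k} (1 - x_{p_k'}))` is affine in that entry: on a simple
path, `1 - x^c_i` is a factor of exactly the products with `k ≥ i'`. The slope is the
probability `Π_{k' < i'} (1 - x_{p_k'})` that the request reaches `i`, times the cost `w_(c,p)`
of serving it from beyond `i`, so the marginal value is `Σ_r λ_r^eff w_r = λ^c_i w̄^c_i`.
-/

/-- Caching gain `G(X)`. -/
noncomputable def cachingGain {C N R : Type*} [Fintype R] (K : R → ℕ) (cont : R → C)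
    (path : R → ℕ → N) (lam : R → ℝ) (w : R → ℕ → ℝ) (x : C → N → ℝ) : ℝ :=
  ∑ r, lam r * ∑ k ∈ Finset.Icc 1 (K r - 1),
    w r k * (1 - ∏ k' ∈ Finset.Icc 1 k, (1 - x (cont r) (path r k')))

/-- `X` with entry `(c,i)` set to `b`. -/
def setEntry {C N : Type*} [DecidableEq C] [DecidableEq N]
    (x : C → N → ℝ) (c : C) (i : N) (b : ℝ) : C → N → ℝ :=
  fun c' j => if c' = c ∧ j = i then b else x c' j

@[to_additive]
theorem Finset.prod_Icc_eq_prod_Ico_mul_mul_prod_Ioc {M : Type*} [CommMonoid M] (f : ℕ → M)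
    {a p k : ℕ} (hap : a ≤ p) (hpk : p ≤ k) :
    ∏ j ∈ Icc a k, f j = (∏ j ∈ Ico a p, f j) * f p * ∏ j ∈ Ioc p k, f j := by
  rw [← Ico_add_one_right_eq_Icc, ← prod_Ico_consecutive f hap (by omega : p ≤ k + 1),
    prod_eq_prod_Ico_succ_bot (a := p) (b := k + 1) (by omega), Ico_add_one_add_one_eq_Ioc,
    mul_assoc]

noncomputable def pathGain (w : ℕ → ℝ) (n : ℕ) (y : ℕ → ℝ) : ℝ :=
  ∑ k ∈ Icc 1 n, w k * (1 - ∏ k' ∈ Icc 1 k, (1 - y k'))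

theorem cachingGain_eq_sum_pathGain {C N R : Type*} [Fintype R] (K : R → ℕ) (cont : R → C)
    (path : R → ℕ → N) (lam : R → ℝ) (w : R → ℕ → ℝ) (x : C → N → ℝ) :
    cachingGain K cont path lam w x =
      ∑ r, lam r * pathGain (w r) (K r - 1) (fun k ↦ x (cont r) (path r k)) :=
  rfl

theorem pathGain_congr (w : ℕ → ℝ) (n : ℕ) {y z : ℕ → ℝ} (h : ∀ k ∈ Icc 1 n, y k = z k) :
    pathGain w n y = pathGain w n z := by
  refine sum_congr rfl fun k hk ↦ ?_
  rw [prod_congr rfl fun k' hk' ↦ ?_]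
  rw [mem_Icc] at hk hk'
  rw [h k' (mem_Icc.2 ⟨hk'.1, hk'.2.trans hk.2⟩)]

theorem pathGain_update (w : ℕ → ℝ) (y : ℕ → ℝ) {n p : ℕ} (hp : p ∈ Icc 1 n) (b : ℝ) :
    pathGain w n (Function.update y p b) =
      ∑ k ∈ Ico 1 p, w k * (1 - ∏ k' ∈ Icc 1 k, (1 - y k')) +
        w p * (1 - (∏ k' ∈ Ico 1 p, (1 - y k')) * (1 - b)) +
        ∑ k ∈ Ioc p n,
          w k * (1 - (∏ k' ∈ Ico 1 p, (1 - y k')) * (1 - b) * ∏ k' ∈ Ioc p k, (1 - y k')) := by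
  rw [mem_Icc] at hp
  have hprefix : ∀ k < p, ∏ k' ∈ Icc 1 k, (1 - Function.update y p b k') =
      ∏ k' ∈ Icc 1 k, (1 - y k') :=
    fun k hk ↦ prod_congr rfl fun k' hk' ↦ by rw [Function.update_of_ne (by grind)]
  have hupstream : ∏ k' ∈ Ico 1 p, (1 - Function.update y p b k') = ∏ k' ∈ Ico 1 p, (1 - y k') :=
    prod_congr rfl fun k' hk' ↦ by rw [Function.update_of_ne (by grind)]
  have hdownstream : ∀ k, ∏ k' ∈ Ioc p k, (1 - Function.update y p b k') =
      ∏ k' ∈ Ioc p k, (1 - y k') :=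
    fun k ↦ prod_congr rfl fun k' hk' ↦ by rw [Function.update_of_ne (by grind)]
  unfold pathGain
  rw [sum_Icc_eq_sum_Ico_add_add_sum_Ioc (M := ℝ) _ hp.1 hp.2]
  congr 1
  · congr 1
    · exact sum_congr rfl fun k hk ↦ by rw [hprefix k (mem_Ico.1 hk).2]
    · rw [prod_Icc_eq_prod_Ico_mul_mul_prod_Ioc _ hp.1 le_rfl, Ioc_self, prod_empty,
        hupstream, Function.update_self, mul_one]
  · refine sum_congr rfl fun k hk ↦ ?_
    rw [prod_Icc_eq_prod_Ico_mul_mul_prod_Ioc _ hp.1 (mem_Ioc.1 hk).1.le, hupstream, hdownstream,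
      Function.update_self]

theorem pathGain_update_one_sub_update_zero (w : ℕ → ℝ) (y : ℕ → ℝ) {n p : ℕ}
    (hp : p ∈ Icc 1 n) :
    pathGain w n (Function.update y p 1) - pathGain w n (Function.update y p 0) =
      (∏ k' ∈ Ico 1 p, (1 - y k')) *
        (w p + ∑ k ∈ Ioc p n, w k * ∏ k' ∈ Ioc p k, (1 - y k')) := by
  set A := ∏ k' ∈ Ico 1 p, (1 - y k')
  have hdiff : ∑ k ∈ Ioc p n, w k * (1 - A * (1 - 1) * ∏ k' ∈ Ioc p k, (1 - y k')) -
      ∑ k ∈ Ioc p n, w k * (1 - A * (1 - 0) * ∏ k' ∈ Ioc p k, (1 - y k')) =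
      A * ∑ k ∈ Ioc p n, w k * ∏ k' ∈ Ioc p k, (1 - y k') := by
    rw [mul_sum, ← sum_sub_distrib]
    exact sum_congr rfl fun k _ ↦ by ring
  rw [pathGain_update w y hp, pathGain_update w y hp]
  linear_combination hdiff

theorem stmt_0_general {C N R : Type*} [DecidableEq C] [DecidableEq N] [Fintype R]
    (K : R → ℕ) (cont : R → C) (path : R → ℕ → N) (lam : R → ℝ) (w : R → ℕ → ℝ)
    (x : C → N → ℝ)
    (c : C) (i : N)
    -- `Rci` is the set of requests for content `c` whose path passes through `i`
    (Rci : Finset R)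
    (hRci : ∀ r, r ∈ Rci ↔ cont r = c ∧ ∃ k ∈ Finset.Icc 1 (K r), path r k = i)
    -- `pos r = i'` is the (unique, since paths are simple) position of `i` on the
    -- path of `r`; `i` is an intermediate node, not the source
    (pos : R → ℕ)
    (hpos : ∀ r ∈ Rci, pos r ∈ Finset.Icc 1 (K r - 1) ∧ path r (pos r) = i)
    (hsimple : ∀ r ∈ Rci, ∀ k ∈ Finset.Icc 1 (K r), path r k = i → k = pos r)
    -- effective arrival rate of requests `(c,p)` reaching node `i`
    (lamEff : R → ℝ)
    (hlamEff : ∀ r, lamEff r =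
      lam r * ∏ k' ∈ Finset.Icc 1 (pos r - 1), (1 - x c (path r k')))
    -- per-request upstream cost of a miss at `i` along the path of `r`
    (wReq : R → ℝ)
    (hwReq : ∀ r, wReq r = w r (pos r) +
      ∑ k ∈ Finset.Icc (pos r + 1) (K r - 1),
        w r k * ∏ k' ∈ Finset.Icc (pos r + 1) k, (1 - x c (path r k')))
    (lamci : ℝ)
    (wbar : ℝ) (hwbar : wbar = (∑ r ∈ Rci, lamEff r * wReq r) / lamci)
    (hpositive : 0 < lamci) :
    cachingGain K cont path lam w (setEntry x c i 1) -
      cachingGain K cont path lam w (setEntry x c i 0) = lamci * wbar := by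
  have hmem : ∀ r k, k ∈ Icc 1 (K r - 1) → k ∈ Icc 1 (K r) := fun r k hk ↦
    Icc_subset_Icc_right (Nat.sub_le _ _) hk
  have hout : ∀ r ∉ Rci, ∀ b, ∀ k ∈ Icc 1 (K r - 1),
      setEntry x c i b (cont r) (path r k) = x (cont r) (path r k) := fun r hr b k hk ↦
    if_neg fun h ↦ hr ((hRci r).2 ⟨h.1, k, hmem r k hk, h.2⟩)
  have hin : ∀ r ∈ Rci, ∀ b, ∀ k ∈ Icc 1 (K r - 1),
      setEntry x c i b (cont r) (path r k) =
        Function.update (fun k ↦ x c (path r k)) (pos r) b k := by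
    intro r hr b k hk
    obtain ⟨hc, -⟩ := (hRci r).1 hr
    by_cases hk' : k = pos r
    · subst hk'
      simp [setEntry, hc, (hpos r hr).2]
    · simp only [setEntry, hc, true_and, Function.update_of_ne hk']
      exact if_neg fun h ↦ hk' (hsimple r hr k (hmem r k hk) h)
  rw [hwbar, mul_div_cancel₀ _ hpositive.ne']
  simp only [cachingGain_eq_sum_pathGain, ← sum_sub_distrib, ← mul_sub]
  rw [← sum_subset (subset_univ Rci) fun r _ hr ↦ ?_]
  · refine sum_congr rfl fun r hr ↦ ?_
    rw [pathGain_congr _ _ (hin r hr 1), pathGain_congr _ _ (hin r hr 0),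
      pathGain_update_one_sub_update_zero _ _ (hpos r hr).1, hlamEff, hwReq,
      Icc_sub_one_right_eq_Ico_of_not_isMin (not_isMin_of_lt (mem_Icc.1 (hpos r hr).1).1)]
    simp only [Icc_add_one_left_eq_Ioc]
    ring
  · rw [pathGain_congr _ _ (hout r hr 1), pathGain_congr _ _ (hout r hr 0), sub_self, mul_zero]

/-- The marginal value `m^c_i(X)` of caching content `c` at node `i` factors as
`λ^c_i ⬝ w̄^c_i`, the effective arrival rate at `i` times the arrival-rate-weighted
average upstream cost, provided `λ^c_i > 0`. -/
theorem stmt_0 {C N R : Type*} [DecidableEq C] [DecidableEq N] [Fintype R]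
    (K : R → ℕ) (cont : R → C) (path : R → ℕ → N) (lam : R → ℝ) (w : R → ℕ → ℝ)
    (hlam : ∀ r, 0 ≤ lam r) (hw : ∀ r k, 0 ≤ w r k)
    (x : C → N → ℝ) (hx : ∀ c' j, x c' j = 0 ∨ x c' j = 1)
    (c : C) (i : N)
    -- `Rci` is the set of requests for content `c` whose path passes through `i`
    (Rci : Finset R)
    (hRci : ∀ r, r ∈ Rci ↔ cont r = c ∧ ∃ k ∈ Finset.Icc 1 (K r), path r k = i)
    -- `pos r = i'` is the (unique, since paths are simple) position of `i` on the
    -- path of `r`; `i` is an intermediate node, not the source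
    (pos : R → ℕ)
    (hpos : ∀ r ∈ Rci, pos r ∈ Finset.Icc 1 (K r - 1) ∧ path r (pos r) = i)
    (hsimple : ∀ r ∈ Rci, ∀ k ∈ Finset.Icc 1 (K r), path r k = i → k = pos r)
    -- effective arrival rate of requests `(c,p)` reaching node `i`
    (lamEff : R → ℝ)
    (hlamEff : ∀ r, lamEff r =
      lam r * ∏ k' ∈ Finset.Icc 1 (pos r - 1), (1 - x c (path r k')))
    -- per-request upstream cost of a miss at `i` along the path of `r`
    (wReq : R → ℝ)
    (hwReq : ∀ r, wReq r = w r (pos r) +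
      ∑ k ∈ Finset.Icc (pos r + 1) (K r - 1),
        w r k * ∏ k' ∈ Finset.Icc (pos r + 1) k, (1 - x c (path r k')))
    (lamci : ℝ) (hlamci : lamci = ∑ r ∈ Rci, lamEff r)
    (wbar : ℝ) (hwbar : wbar = (∑ r ∈ Rci, lamEff r * wReq r) / lamci)
    (hpositive : 0 < lamci) :
    cachingGain K cont path lam w (setEntry x c i 1) -
      cachingGain K cont path lam w (setEntry x c i 0) = lamci * wbar :=
  stmt_0_general K cont path lam w x c i Rci hRci pos hpos hsimple lamEff hlamEff wReq hwReq lamci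
    wbar hwbar hpositive
end

section
/- The set function g(A) = G(X_A) is submodular: for all A ⊆ B ⊆ E and e ∈ E \ B, g(A ∪ {e}) - g(A) ≥ g(B ∪ {e}) - g(B). -/
/-! For a 0/1 decision `X_A`, each term `1 - ∏ (1 - x)` of the gain is the indicator that `A`
meets a fixed finite set of items, i.e. a coverage function, and coverage functions have
diminishing returns. The gain is a nonnegative combination of such terms, and nonnegative
combinations preserve diminishing returns. -/

open Finset

/-- The cache decision `X_A` associated with a set `A` of (content, node) pairs. -/
def decisionOf {C N : Type*} [DecidableEq C] [DecidableEq N]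
    (A : Finset (C × N)) : C → N → ℝ :=
  fun c i => if (c, i) ∈ A then 1 else 0

/-- Submodularity, in its diminishing-returns form. -/
def HasDiminishingReturns {α : Type*} [DecidableEq α] (f : Finset α → ℝ) : Prop :=
  ∀ ⦃A B : Finset α⦄, A ⊆ B → ∀ e, f (insert e B) - f B ≤ f (insert e A) - f A

namespace HasDiminishingReturns

variable {α : Type*} [DecidableEq α]

lemma mul_left {f : Finset α → ℝ} (hf : HasDiminishingReturns f) {c : ℝ} (hc : 0 ≤ c) :
    HasDiminishingReturns fun S => c * f S := by
  intro A B hAB e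
  simpa only [← mul_sub] using mul_le_mul_of_nonneg_left (hf hAB e) hc

lemma sum {ι : Type*} (s : Finset ι) {f : ι → Finset α → ℝ}
    (hf : ∀ i ∈ s, HasDiminishingReturns (f i)) :
    HasDiminishingReturns fun S => ∑ i ∈ s, f i S := by
  intro A B hAB e
  simpa only [← sum_sub_distrib] using sum_le_sum fun i hi => hf i hi hAB e

end HasDiminishingReturns

lemma hasDiminishingReturns_ite_exists_mem {α ι : Type*} [DecidableEq α] (s : Finset ι)
    (φ : ι → α) :
    HasDiminishingReturns fun S => if ∃ i ∈ s, φ i ∈ S then (1 : ℝ) else 0 := by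
  intro A B hAB e
  dsimp only
  have mono : ∀ {S T : Finset α}, S ⊆ T → (∃ i ∈ s, φ i ∈ S) → ∃ i ∈ s, φ i ∈ T :=
    fun hST ⟨i, hi, hiS⟩ => ⟨i, hi, hST hiS⟩
  by_cases hB : ∃ i ∈ s, φ i ∈ B
  · rw [if_pos hB, if_pos (mono (subset_insert e B) hB), sub_self, sub_nonneg]
    split_ifs with hA' hA <;> norm_num
    exact hA (mono (subset_insert e A) hA')
  · have hA : ¬∃ i ∈ s, φ i ∈ A := fun h => hB (mono hAB h)
    have hitByE : (∃ i ∈ s, φ i ∈ insert e B) → ∃ i ∈ s, φ i ∈ insert e A := by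
      rintro ⟨i, hi, hiB⟩
      rcases mem_insert.1 hiB with hie | hiB
      · exact ⟨i, hi, hie ▸ mem_insert_self e A⟩
      · exact absurd ⟨i, hi, hiB⟩ hB
    rw [if_neg hB, if_neg hA, sub_zero, sub_zero]
    split_ifs with hB' hA' <;> norm_num
    exact hA' (hitByE hB')

lemma one_sub_prod_one_sub_decisionOf {C N ι : Type*} [DecidableEq C] [DecidableEq N]
    (S : Finset (C × N)) (c : C) (s : Finset ι) (p : ι → N) :
    1 - ∏ i ∈ s, (1 - decisionOf S c (p i)) = if ∃ i ∈ s, (c, p i) ∈ S then 1 else 0 := by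
  have hfactor : ∀ i, 1 - decisionOf S c (p i) = if (c, p i) ∉ S then 1 else 0 := fun i => by
    by_cases h : (c, p i) ∈ S <;> simp [decisionOf, h]
  have hmiss : (∀ i ∈ s, (c, p i) ∉ S) ↔ ¬∃ i ∈ s, (c, p i) ∈ S := by simp
  rw [prod_congr rfl fun i _ => hfactor i, prod_boole]
  simp only [hmiss]
  split_ifs <;> norm_num

lemma hasDiminishingReturns_cachingGain {C N R : Type*} [DecidableEq C] [DecidableEq N]
    [Fintype R] (K : R → ℕ) (cont : R → C) (path : R → ℕ → N) {lam : R → ℝ} {w : R → ℕ → ℝ}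
    (hlam : ∀ r, 0 ≤ lam r) (hw : ∀ r k, 0 ≤ w r k) :
    HasDiminishingReturns fun S => cachingGain K cont path lam w (decisionOf S) := by
  simp only [cachingGain, one_sub_prod_one_sub_decisionOf]
  exact .sum _ fun r _ => .mul_left (.sum _ fun k _ =>
    .mul_left (hasDiminishingReturns_ite_exists_mem _ _) (hw r k)) (hlam r)

theorem stmt_3_general {C N R : Type*} [DecidableEq C] [DecidableEq N] [Fintype R]
    (K : R → ℕ) (cont : R → C) (path : R → ℕ → N) (lam : R → ℝ) (w : R → ℕ → ℝ)
    (hlam : ∀ r, 0 ≤ lam r) (hw : ∀ r k, 0 ≤ w r k)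
    (A B : Finset (C × N)) (hAB : A ⊆ B) (e : C × N) :
    cachingGain K cont path lam w (decisionOf (insert e B)) -
        cachingGain K cont path lam w (decisionOf B) ≤
      cachingGain K cont path lam w (decisionOf (insert e A)) -
        cachingGain K cont path lam w (decisionOf A) :=
  hasDiminishingReturns_cachingGain K cont path hlam hw hAB e

/-- The set function `g(A) = G(X_A)` is submodular. -/
theorem stmt_3 {C N R : Type*} [DecidableEq C] [DecidableEq N] [Fintype R]
    (K : R → ℕ) (cont : R → C) (path : R → ℕ → N) (lam : R → ℝ) (w : R → ℕ → ℝ)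
    (hlam : ∀ r, 0 ≤ lam r) (hw : ∀ r k, 0 ≤ w r k)
    (A B : Finset (C × N)) (hAB : A ⊆ B) (e : C × N) (he : e ∉ B) :
    cachingGain K cont path lam w (decisionOf (insert e B)) -
        cachingGain K cont path lam w (decisionOf B) ≤
      cachingGain K cont path lam w (decisionOf (insert e A)) -
        cachingGain K cont path lam w (decisionOf A) :=
  stmt_3_general K cont path lam w hlam hw A B hAB e
end

section
/- For a monotone submodular function g : 2^E → ℝ with g(∅) = 0 and a matroid M = (E, I), the greedy algorithm that repeatedly adds the feasible element of maximum marginal gain produces a basis A with g(A) ≥ (1/2) · max_{B ∈ I} g(B). -/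
/-!
Let `A₀ ⊆ A₁ ⊆ ⋯ ⊆ Aₙ = A` be the greedy prefixes and `δₖ = g(Aₖ₊₁) - g(Aₖ)` the greedy gains,
which decrease by greedy choice and submodularity. Each `b ∈ B \ A` can still be added to
`A_{t b}` but no longer to `A_{t b + 1}`; greedy choice and submodularity bound its marginal gain
at `A` by `δ_{t b}`. The elements with `t b < k` form an independent set that cannot augment `Aₖ`,
so there are at most `k` of them, and for decreasing `δ` this gives `∑_{b} δ_{t b} ≤ ∑_{k < m} δₖ
= g(Aₘ) ≤ g(A)`. Hence `g(B) ≤ g(A ∪ B) ≤ g(A) + ∑_{b ∈ B \ A} (g(A + b) - g(A)) ≤ 2 g(A)`.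
-/

open Finset

theorem Nat.exists_and_not_succ_of_not {p : ℕ → Prop} (h0 : p 0) {m : ℕ} (hm : ¬ p m) :
    ∃ k, p k ∧ ¬ p (k + 1) := by
  by_contra! h
  exact hm (Nat.rec h0 h m)

/-- The hypothesis says that the `j`-th smallest value of `f` on `S` is at least `j`. -/
theorem Antitone.sum_comp_le_sum_range {ι M : Type*} [DecidableEq ι] [AddCommMonoid M]
    [PartialOrder M] [IsOrderedAddMonoid M] {δ : ℕ → M} (hδ : Antitone δ) (f : ι → ℕ)
    (S : Finset ι) (hS : ∀ k, #{i ∈ S | f i < k} ≤ k) :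
    ∑ i ∈ S, δ (f i) ≤ ∑ k ∈ range #S, δ k := by
  induction S using Finset.induction_on_max_value f with
  | empty => simp
  | insert a S ha hmax ih =>
    have hcard : #S ≤ f a := by
      have := hS (f a + 1)
      rwa [filter_true_of_mem fun i hi => Nat.lt_succ_of_le <| by
        rcases mem_insert.1 hi with rfl | hi
        exacts [le_rfl, hmax i hi], card_insert_of_notMem ha, Nat.add_le_add_iff_right] at this
    rw [sum_insert ha, card_insert_of_notMem ha, sum_range_succ, add_comm]
    exact add_le_add (ih fun k => (card_le_card (filter_subset_filter _ (subset_insert a S))).trans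
      (hS k)) (hδ hcard)

section

variable {E : Type*} [DecidableEq E]

def marginalGain (g : Finset E → ℝ) (A : Finset E) (e : E) : ℝ :=
  g (insert e A) - g A

theorem le_add_sum_marginalGain (g : Finset E → ℝ)
    (hsub : ∀ A B : Finset E, A ⊆ B → ∀ e, e ∉ B →
      g (insert e B) - g B ≤ g (insert e A) - g A)
    (A S : Finset E) :
    g (A ∪ S) ≤ g A + ∑ b ∈ S \ A, marginalGain g A b := by
  induction S using Finset.induction with
  | empty => simp
  | insert x S hx ih =>
    by_cases hxA : x ∈ A
    · rwa [union_insert, insert_eq_self.2 (mem_union_left _ hxA), insert_sdiff_of_mem _ hxA]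
    · have hxS : x ∉ A ∪ S := by simp [hxA, hx]
      have := hsub A (A ∪ S) subset_union_left x hxS
      rw [union_insert, insert_sdiff_of_notMem _ hxA, sum_insert (by simp [hx]), marginalGain]
      linarith

theorem card_le_card_of_forall_insert_notMem {I : Set (Finset E)}
    (hIexch : ∀ A B : Finset E, A ∈ I → B ∈ I → A.card < B.card →
      ∃ e ∈ B, e ∉ A ∧ insert e A ∈ I)
    {A D : Finset E} (hA : A ∈ I) (hD : D ∈ I) (hDA : ∀ e ∈ D, e ∉ A → insert e A ∉ I) :
    #D ≤ #A := by
  by_contra! h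
  obtain ⟨e, heD, heA, he⟩ := hIexch A D hA hD h
  exact hDA e heD heA he

theorem List.toFinset_take_mono (l : List E) : Monotone fun k => (l.take k).toFinset :=
  fun _ _ h _ hx => List.mem_toFinset.2 (List.take_subset_take_left l h (List.mem_toFinset.1 hx))

theorem List.toFinset_take_subset (l : List E) (k : ℕ) : (l.take k).toFinset ⊆ l.toFinset :=
  fun _ hx => List.mem_toFinset.2 (List.take_subset k l (List.mem_toFinset.1 hx))

theorem List.toFinset_take_succ (l : List E) {k : ℕ} (hk : k < l.length) :
    (l.take (k + 1)).toFinset = insert l[k] (l.take k).toFinset := by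
  rw [List.take_succ_eq_append_getElem hk, List.toFinset_append]
  simp

theorem List.card_toFinset_take_le (l : List E) (k : ℕ) : #(l.take k).toFinset ≤ k :=
  (List.toFinset_card_le _).trans (List.length_take_le k l)

def prefixGain (g : Finset E → ℝ) (l : List E) (k : ℕ) : ℝ :=
  g (l.take (k + 1)).toFinset - g (l.take k).toFinset

theorem sum_range_prefixGain {g : Finset E → ℝ} (hempty : g ∅ = 0) (l : List E) (m : ℕ) :
    ∑ k ∈ range m, prefixGain g l k = g (l.take m).toFinset := by
  unfold prefixGain
  rw [sum_range_sub (fun k => g (l.take k).toFinset)]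
  simp [hempty]

theorem prefixGain_eq_marginalGain (g : Finset E → ℝ) {l : List E} {k : ℕ} (hk : k < l.length) :
    prefixGain g l k = marginalGain g (l.take k).toFinset l[k] := by
  rw [prefixGain, marginalGain, l.toFinset_take_succ hk]

structure IsGreedyRun (g : Finset E → ℝ) (I : Set (Finset E)) (l : List E) : Prop where
  getElem_notMem : ∀ k (hk : k < l.length), l[k] ∉ (l.take k).toFinset
  insert_getElem_mem : ∀ k (hk : k < l.length), insert l[k] (l.take k).toFinset ∈ I
  marginalGain_le : ∀ k (hk : k < l.length) e, e ∉ (l.take k).toFinset →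
    insert e (l.take k).toFinset ∈ I →
      marginalGain g (l.take k).toFinset e ≤ marginalGain g (l.take k).toFinset l[k]
  maximal : ∀ e, e ∉ l.toFinset → insert e l.toFinset ∉ I

namespace IsGreedyRun

variable {g : Finset E → ℝ} {I : Set (Finset E)} {l : List E}

theorem toFinset_take_mem (h : IsGreedyRun g I l) (hIempty : (∅ : Finset E) ∈ I) (k : ℕ) :
    (l.take k).toFinset ∈ I := by
  induction k with
  | zero => simpa using hIempty
  | succ k ih =>
    by_cases hk : k < l.length
    · rw [l.toFinset_take_succ hk]
      exact h.insert_getElem_mem k hk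
    · rwa [List.take_of_length_le (by omega), ← List.take_of_length_le (l := l) (i := k) (by omega)]

theorem marginalGain_le_prefixGain (h : IsGreedyRun g I l) {k : ℕ} {e : E}
    (he : e ∉ (l.take k).toFinset) (heI : insert e (l.take k).toFinset ∈ I) :
    marginalGain g (l.take k).toFinset e ≤ prefixGain g l k := by
  by_cases hk : k < l.length
  · rw [prefixGain_eq_marginalGain g hk]
    exact h.marginalGain_le k hk e he heI
  · rw [List.take_of_length_le (by omega)] at he heI
    exact absurd heI (h.maximal e he)

theorem antitone_prefixGain (h : IsGreedyRun g I l)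
    (hmono : ∀ A B : Finset E, A ⊆ B → g A ≤ g B)
    (hsub : ∀ A B : Finset E, A ⊆ B → ∀ e, e ∉ B →
      g (insert e B) - g B ≤ g (insert e A) - g A)
    (hIdown : ∀ A B : Finset E, A ⊆ B → B ∈ I → A ∈ I) :
    Antitone (prefixGain g l) := by
  have hmono_take := l.toFinset_take_mono
  refine antitone_nat_of_succ_le fun k => ?_
  by_cases hk : k + 1 < l.length
  · have hnotMem := h.getElem_notMem (k + 1) hk
    rw [prefixGain_eq_marginalGain g hk]
    calc marginalGain g (l.take (k + 1)).toFinset l[k + 1]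
        ≤ marginalGain g (l.take k).toFinset l[k + 1] :=
          hsub _ _ (hmono_take k.le_succ) _ hnotMem
      _ ≤ prefixGain g l k :=
          h.marginalGain_le_prefixGain (fun h' => hnotMem (hmono_take k.le_succ h'))
            (hIdown _ _ (insert_subset_insert _ (hmono_take k.le_succ))
              (h.insert_getElem_mem (k + 1) hk))
  · have hzero : prefixGain g l (k + 1) = 0 := by
      rw [prefixGain, List.take_of_length_le (by omega), List.take_of_length_le (by omega),
        sub_self]
    rw [hzero, prefixGain, sub_nonneg]
    exact hmono _ _ (hmono_take k.le_succ)

theorem card_filter_lt_le (h : IsGreedyRun g I l)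
    (hIdown : ∀ A B : Finset E, A ⊆ B → B ∈ I → A ∈ I)
    (hIexch : ∀ A B : Finset E, A ∈ I → B ∈ I → A.card < B.card →
      ∃ e ∈ B, e ∉ A ∧ insert e A ∈ I)
    {S : Finset E} (hS : S ∈ I) {t : E → ℕ}
    (ht : ∀ b ∈ S, insert b (l.take (t b + 1)).toFinset ∉ I) (k : ℕ) :
    #{b ∈ S | t b < k} ≤ k := by
  have hIempty : (∅ : Finset E) ∈ I := hIdown _ _ (empty_subset S) hS
  refine (card_le_card_of_forall_insert_notMem hIexch (h.toFinset_take_mem hIempty k)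
    (hIdown _ _ (filter_subset _ S) hS) fun b hb _ hbI => ?_).trans (l.card_toFinset_take_le k)
  obtain ⟨hbS, hbk⟩ := mem_filter.1 hb
  exact ht b hbS (hIdown _ _ (insert_subset_insert _ (l.toFinset_take_mono hbk)) hbI)

end IsGreedyRun

end

theorem stmt_6_general {E : Type*} [DecidableEq E]
    (g : Finset E → ℝ) (I : Set (Finset E))
    (hmono : ∀ A B : Finset E, A ⊆ B → g A ≤ g B)
    (hsub : ∀ A B : Finset E, A ⊆ B → ∀ e, e ∉ B →
      g (insert e B) - g B ≤ g (insert e A) - g A)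
    (hempty : g ∅ = 0)
    (hIdown : ∀ A B : Finset E, A ⊆ B → B ∈ I → A ∈ I)
    (hIexch : ∀ A B : Finset E, A ∈ I → B ∈ I → A.card < B.card →
      ∃ e ∈ B, e ∉ A ∧ insert e A ∈ I)
    (l : List E)
    -- at each step, the chosen element is feasible and has maximum marginal gain
    (hstep : ∀ k (hk : k < l.length),
      l.get ⟨k, hk⟩ ∉ (l.take k).toFinset ∧
      insert (l.get ⟨k, hk⟩) (l.take k).toFinset ∈ I ∧
      ∀ e, e ∉ (l.take k).toFinset → insert e (l.take k).toFinset ∈ I →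
        g (insert e (l.take k).toFinset) - g (l.take k).toFinset ≤
          g (insert (l.get ⟨k, hk⟩) (l.take k).toFinset) - g (l.take k).toFinset)
    -- the algorithm stops when no feasible element remains: the output is a basis
    (hmax : ∀ e, e ∉ l.toFinset → insert e l.toFinset ∉ I) :
    ∀ B ∈ I, (1 / 2 : ℝ) * g B ≤ g l.toFinset := by
  intro B hB
  have hl : IsGreedyRun g I l :=
    ⟨fun k hk => (hstep k hk).1, fun k hk => (hstep k hk).2.1, fun k hk => (hstep k hk).2.2, hmax⟩
  set A := l.toFinset
  have hnotMem_A : ∀ b ∈ B \ A, b ∉ A := fun b hb => (mem_sdiff.1 hb).2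
  have hthreshold : ∀ b ∈ B \ A,
      ∃ k, insert b (l.take k).toFinset ∈ I ∧ insert b (l.take (k + 1)).toFinset ∉ I :=
    fun b hb => Nat.exists_and_not_succ_of_not (m := l.length)
      (by simpa using hIdown {b} B (by simpa using (mem_sdiff.1 hb).1) hB)
      (by simpa using hmax b (hnotMem_A b hb))
  choose! t ht using hthreshold
  have hgain : ∀ b ∈ B \ A, marginalGain g A b ≤ prefixGain g l (t b) := fun b hb =>
    (hsub _ A (l.toFinset_take_subset _) b (hnotMem_A b hb)).trans
      (hl.marginalGain_le_prefixGain (fun h => hnotMem_A b hb (l.toFinset_take_subset _ h)) (ht b hb).1)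
  have hcount := hl.card_filter_lt_le hIdown hIexch (hIdown _ B sdiff_subset hB)
    fun b hb => (ht b hb).2
  have hB_le : g B ≤ g A + g A := calc
    g B ≤ g (A ∪ B) := hmono _ _ subset_union_right
    _ ≤ g A + ∑ b ∈ B \ A, marginalGain g A b := le_add_sum_marginalGain g hsub A B
    _ ≤ g A + ∑ b ∈ B \ A, prefixGain g l (t b) := by gcongr with b hb; exact hgain b hb
    _ ≤ g A + ∑ k ∈ range #(B \ A), prefixGain g l k := by
      gcongr
      exact (hl.antitone_prefixGain hmono hsub hIdown).sum_comp_le_sum_range t _ hcount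
    _ ≤ g A + g A := by
      rw [sum_range_prefixGain hempty]
      gcongr
      exact hmono _ _ (l.toFinset_take_subset _)
  linarith

/-- Greedy 1/2-approximation: for a monotone submodular `g` with `g ∅ = 0` and a
matroid `(E, I)`, the greedy algorithm (encoded by the list `l` of elements added,
in order) that repeatedly adds a feasible element of maximum marginal gain, until no
feasible element remains, yields a basis `A = l.toFinset` with
`g A ≥ (1/2) · g B` for every independent `B`. -/
theorem stmt_6 {E : Type*} [Fintype E] [DecidableEq E]
    (g : Finset E → ℝ) (I : Set (Finset E))
    (hmono : ∀ A B : Finset E, A ⊆ B → g A ≤ g B)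
    (hsub : ∀ A B : Finset E, A ⊆ B → ∀ e, e ∉ B →
      g (insert e B) - g B ≤ g (insert e A) - g A)
    (hempty : g ∅ = 0)
    (hIempty : (∅ : Finset E) ∈ I)
    (hIdown : ∀ A B : Finset E, A ⊆ B → B ∈ I → A ∈ I)
    (hIexch : ∀ A B : Finset E, A ∈ I → B ∈ I → A.card < B.card →
      ∃ e ∈ B, e ∉ A ∧ insert e A ∈ I)
    (l : List E) (hnd : l.Nodup)
    -- at each step, the chosen element is feasible and has maximum marginal gain
    (hstep : ∀ k (hk : k < l.length),
      l.get ⟨k, hk⟩ ∉ (l.take k).toFinset ∧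
      insert (l.get ⟨k, hk⟩) (l.take k).toFinset ∈ I ∧
      ∀ e, e ∉ (l.take k).toFinset → insert e (l.take k).toFinset ∈ I →
        g (insert e (l.take k).toFinset) - g (l.take k).toFinset ≤
          g (insert (l.get ⟨k, hk⟩) (l.take k).toFinset) - g (l.take k).toFinset)
    -- the algorithm stops when no feasible element remains: the output is a basis
    (hmax : ∀ e, e ∉ l.toFinset → insert e l.toFinset ∉ I) :
    ∀ B ∈ I, (1 / 2 : ℝ) * g B ≤ g l.toFinset :=
  stmt_6_general g I hmono hsub hempty hIdown hIexch l hstep hmax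
end
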